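/- Let A be a nonnegative m × n matrix that is rectangular lower triangular, i.e., A_{i,j} = 0 for all i > j, and let V = { i ≤ min(m,n) : A_{i,i} ≠ 0 }. Then the asymptotic nonnegative subrank of A satisfies lim_{N→∞} Q(A^{⊗N})^{1/N} ≥ |V|. -/

import Mathlib

open Matrix Kronecker

/-- A real matrix is (entrywise) nonnegative. -/
def EntrywiseNonneg {m n : Type*} (A : Matrix m n ℝ) : Prop := ∀ i j, 0 ≤ A i j

/-- `A ≤k B`: there are nonnegative matrices `X`, `Y` with `A = X * B * Yᵀ`. -/
def KLE {mA nA mB nB : Type*} [Fintype mB] [Fintype nB]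
    (A : Matrix mA nA ℝ) (B : Matrix mB nB ℝ) : Prop :=
  ∃ (X : Matrix mA mB ℝ) (Y : Matrix nA nB ℝ),
    EntrywiseNonneg X ∧ EntrywiseNonneg Y ∧ A = X * B * Yᵀ

/-- The nonnegative subrank: the largest `q` such that `I_q ≤k A`. -/
noncomputable def subrank {m n : Type*} [Fintype m] [Fintype n] (A : Matrix m n ℝ) : ℕ :=
  sSup {q : ℕ | KLE (1 : Matrix (Fin q) (Fin q) ℝ) A}

/-- The `N`-fold Kronecker power of a matrix, indexed by tuples. -/
noncomputable def kronPow {m n : ℕ} (A : Matrix (Fin m) (Fin n) ℝ) (N : ℕ) :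
    Matrix (Fin N → Fin m) (Fin N → Fin n) ℝ :=
  Matrix.of fun i j => ∏ k : Fin N, A (i k) (j k)

set_option linter.unusedSectionVars false
set_option linter.unusedVariables false

lemma kronPow_apply {m n : ℕ} (A : Matrix (Fin m) (Fin n) ℝ) (N : ℕ)
    (i : Fin N → Fin m) (j : Fin N → Fin n) :
    kronPow A N i j = ∏ k : Fin N, A (i k) (j k) := rfl

section Lemmas

variable {mA nA mB nB mC nC mD nD m' n' : Type*}
variable [Fintype mB] [Fintype nB] [Fintype mD] [Fintype nD]

lemma KLE.submatrix_left {A : Matrix mA nA ℝ} {B : Matrix mB nB ℝ}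
    (h : KLE A B) (f : m' → mA) (g : n' → nA) : KLE (A.submatrix f g) B := by
  obtain ⟨X, Y, hX, hY, rfl⟩ := h
  refine ⟨X.submatrix f id, Y.submatrix g id, fun i j => hX _ _, fun i j => hY _ _, ?_⟩
  ext i j
  simp [Matrix.mul_apply]

lemma KLE.of_submatrix_right [Fintype m'] [Fintype n']
    {A : Matrix mA nA ℝ} {B : Matrix mB nB ℝ} (e : m' ≃ mB) (f : n' ≃ nB)
    (h : KLE A (B.submatrix e f)) : KLE A B := by
  obtain ⟨X, Y, hX, hY, rfl⟩ := h
  refine ⟨X.submatrix id e.symm, Y.submatrix id f.symm, fun i j => hX _ _,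
    fun i j => hY _ _, ?_⟩
  ext i j
  simp only [Matrix.mul_apply, Matrix.transpose_apply, Matrix.submatrix_apply, id,
    Finset.sum_mul]
  refine Fintype.sum_equiv f _ _ fun a' => ?_
  rw [f.symm_apply_apply]
  exact Fintype.sum_equiv e _ _ fun a => by rw [e.symm_apply_apply]

lemma KLE.kron {A : Matrix mA nA ℝ} {B : Matrix mB nB ℝ} {C : Matrix mC nC ℝ}
    {D : Matrix mD nD ℝ} (h1 : KLE A B) (h2 : KLE C D) :
    KLE (A ⊗ₖ C) (B ⊗ₖ D) := by
  obtain ⟨X, Y, hX, hY, rfl⟩ := h1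
  obtain ⟨X', Y', hX', hY', rfl⟩ := h2
  refine ⟨X ⊗ₖ X', Y ⊗ₖ Y', fun i j => mul_nonneg (hX _ _) (hX' _ _),
    fun i j => mul_nonneg (hY _ _) (hY' _ _), ?_⟩
  rw [← Matrix.mul_kronecker_mul, ← Matrix.kroneckerMap_transpose,
    ← Matrix.mul_kronecker_mul]

end Lemmas

section Sub
variable {mB nB : Type*} [Fintype mB] [Fintype nB] [DecidableEq mB] [DecidableEq nB]
variable (B : Matrix mB nB ℝ)

lemma zero_mem_kle : KLE (1 : Matrix (Fin 0) (Fin 0) ℝ) B :=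
  ⟨0, 0, fun i _ => i.elim0, fun i _ => i.elim0, by ext i j; exact i.elim0⟩

lemma kle_le_card {q : ℕ} (h : KLE (1 : Matrix (Fin q) (Fin q) ℝ) B) :
    q ≤ Fintype.card mB := by
  obtain ⟨X, Y, -, -, h⟩ := h
  calc q = (1 : Matrix (Fin q) (Fin q) ℝ).rank := by simp
    _ = (X * B * Yᵀ).rank := by rw [← h]
    _ ≤ (X * B).rank := Matrix.rank_mul_le_left _ _
    _ ≤ B.rank := Matrix.rank_mul_le_right _ _
    _ ≤ Fintype.card mB := Matrix.rank_le_card_height _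

lemma bddAbove_kle : BddAbove {q : ℕ | KLE (1 : Matrix (Fin q) (Fin q) ℝ) B} :=
  ⟨Fintype.card mB, fun _ h => kle_le_card B h⟩

lemma subrank_le_card : subrank B ≤ Fintype.card mB :=
  csSup_le ⟨0, zero_mem_kle B⟩ fun _ h => kle_le_card B h

lemma subrank_mem : KLE (1 : Matrix (Fin (subrank B)) (Fin (subrank B)) ℝ) B :=
  Nat.sSup_mem ⟨0, zero_mem_kle B⟩ (bddAbove_kle B)

lemma le_subrank {q : ℕ} (h : KLE (1 : Matrix (Fin q) (Fin q) ℝ) B) :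
    q ≤ subrank B := le_csSup (bddAbove_kle B) h

lemma KLE_one_of {q : ℕ} (ι : Fin q → mB) (κ : Fin q → nB)
    (hdiag : ∀ a, 0 < B (ι a) (κ a))
    (hoff : ∀ a b, a ≠ b → B (ι a) (κ b) = 0) :
    KLE (1 : Matrix (Fin q) (Fin q) ℝ) B := by
  refine ⟨Matrix.of fun a i => if ι a = i then (B (ι a) (κ a))⁻¹ else 0,
      Matrix.of fun b j => if κ b = j then 1 else 0, ?_, ?_, ?_⟩
  · intro a i
    dsimp only [Matrix.of_apply]
    split
    · exact inv_nonneg.2 (hdiag a).le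
    · exact le_refl 0
  · intro b j
    dsimp only [Matrix.of_apply]
    split
    · exact zero_le_one
    · exact le_refl 0
  · ext a b
    simp only [Matrix.mul_apply, Matrix.transpose_apply, Matrix.of_apply, ite_mul, mul_ite,
      zero_mul, mul_zero, mul_one, Finset.sum_ite_eq, Finset.mem_univ, if_true,
      Matrix.one_apply]
    split
    · subst ‹a = b›; exact (inv_mul_cancel₀ (hdiag a).ne').symm
    · rw [hoff a b ‹a ≠ b›, mul_zero]
end Sub

lemma kron_split {m n : ℕ} (A : Matrix (Fin m) (Fin n) ℝ) (M N : ℕ) :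
    (kronPow A M) ⊗ₖ (kronPow A N)
      = (kronPow A (M + N)).submatrix (Fin.appendEquiv M N) (Fin.appendEquiv M N) := by
  ext ⟨a, b⟩ ⟨c, d⟩
  simp only [Matrix.kroneckerMap_apply, kronPow, Matrix.of_apply, Matrix.submatrix_apply,
    Fin.appendEquiv_apply]
  rw [Fin.prod_univ_add]
  simp [Fin.append_left, Fin.append_right]

lemma subrank_superadd {m n : ℕ} (A : Matrix (Fin m) (Fin n) ℝ) (M N : ℕ) :
    subrank (kronPow A M) * subrank (kronPow A N) ≤ subrank (kronPow A (M + N)) := by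
  have h := (subrank_mem (kronPow A M)).kron (subrank_mem (kronPow A N))
  rw [Matrix.one_kronecker_one] at h
  have h2 := h.submatrix_left (finProdFinEquiv.symm :
      Fin (subrank (kronPow A M) * subrank (kronPow A N)) ≃ _)
    (finProdFinEquiv.symm : Fin (subrank (kronPow A M) * subrank (kronPow A N)) ≃ _)
  rw [Matrix.submatrix_one_equiv] at h2
  rw [kron_split] at h2
  exact le_subrank _ (h2.of_submatrix_right (Fin.appendEquiv M N) (Fin.appendEquiv M N))

lemma kronPow_nonneg {m n : ℕ} {A : Matrix (Fin m) (Fin n) ℝ} (hA : EntrywiseNonneg A)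
    (N : ℕ) : EntrywiseNonneg (kronPow A N) := by
  intro i j
  rw [kronPow_apply]
  exact Finset.prod_nonneg fun _ _ => hA _ _

lemma key_bound {m n : ℕ} (A : Matrix (Fin m) (Fin n) ℝ) (hA : EntrywiseNonneg A)
    (htri : ∀ (i : Fin m) (j : Fin n), (j : ℕ) < (i : ℕ) → A i j = 0) (N : ℕ) :
    (Finset.univ.filter (fun i : Fin (min m n) =>
        A (Fin.castLE (min_le_left m n) i) (Fin.castLE (min_le_right m n) i) ≠ 0)).card ^ N
      ≤ (N * min m n + 1) * subrank (kronPow A N) := by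
  classical
  set mn := min m n with hmn
  set P : Fin mn → Prop := fun i =>
    A (Fin.castLE (min_le_left m n) i) (Fin.castLE (min_le_right m n) i) ≠ 0 with hPdef
  set V := Finset.univ.filter P with hV
  set s : Finset (Fin N → Fin mn) := Finset.univ.filter (fun u => ∀ k, P (u k)) with hs
  have hmem_s : ∀ u, u ∈ s ↔ ∀ k, P (u k) := by
    intro u; simp [hs]
  -- counting
  have hcard : V.card ^ N ≤ s.card := by
    have hinj : Function.Injective
        (fun (u : Fin N → {i // P i}) => (fun k => (u k : Fin mn))) :=
      fun u v h => funext fun k => Subtype.ext (congrFun h k)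
    have h1 : V.card ^ N = Fintype.card (Fin N → {i // P i}) := by
      simp [Fintype.card_fun, Fintype.card_subtype, hV]
    rw [h1]
    calc Fintype.card (Fin N → {i // P i})
        = (Finset.univ.map ⟨_, hinj⟩).card := by rw [Finset.card_map, Finset.card_univ]
      _ ≤ s.card := ?_
    apply Finset.card_le_card
    intro x hx
    simp only [Finset.mem_map, Finset.mem_univ, true_and, Function.Embedding.coeFn_mk] at hx
    obtain ⟨u, rfl⟩ := hx
    exact (hmem_s _).2 fun k => (u k).2
  set g : (Fin N → Fin mn) → ℕ := fun u => ∑ k, (u k : ℕ) with hg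
  have hmaps : ∀ u ∈ s, g u ∈ Finset.range (N * mn + 1) := by
    intro u _
    simp only [Finset.mem_range, Nat.lt_succ_iff, hg]
    calc ∑ k, ((u k : ℕ)) ≤ ∑ _k : Fin N, mn :=
          Finset.sum_le_sum fun k _ => (u k).isLt.le
      _ = N * mn := by simp [Finset.sum_const, mul_comm]
  obtain ⟨y₀, hy₀, hmax⟩ := Finset.exists_max_image (Finset.range (N*mn+1))
    (fun y => (s.filter fun u => g u = y).card) ⟨0, by simp⟩
  set S := s.filter (fun u => g u = y₀) with hS
  have h1 : s.card ≤ (N*mn+1) * S.card := by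
    rw [Finset.card_eq_sum_card_fiberwise hmaps]
    calc ∑ y ∈ Finset.range (N*mn+1), (s.filter fun u => g u = y).card
        ≤ ∑ _y ∈ Finset.range (N*mn+1), S.card :=
          Finset.sum_le_sum fun y hy => hmax y hy
      _ = (N*mn+1) * S.card := by simp [Finset.sum_const, Finset.card_range]
  -- the KLE construction
  have hkle : KLE (1 : Matrix (Fin S.card) (Fin S.card) ℝ) (kronPow A N) := by
    have e : Fin S.card ≃ {x // x ∈ S} :=
      (Fintype.equivFinOfCardEq (Fintype.card_coe S)).symm
    have hmemS : ∀ (a : Fin S.card), (e a : Fin N → Fin mn) ∈ S := fun a => (e a).2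
    have hPk : ∀ (a : Fin S.card) (k : Fin N), P ((e a : Fin N → Fin mn) k) := by
      intro a k
      have := (Finset.mem_filter.1 (hmemS a)).1
      exact (hmem_s _).1 this k
    have hsum : ∀ (a : Fin S.card), g (e a : Fin N → Fin mn) = y₀ := fun a =>
      (Finset.mem_filter.1 (hmemS a)).2
    apply KLE_one_of (kronPow A N)
      (ι := fun a k => Fin.castLE (min_le_left m n) ((e a : Fin N → Fin mn) k))
      (κ := fun a k => Fin.castLE (min_le_right m n) ((e a : Fin N → Fin mn) k))
    · intro a
      rw [kronPow_apply]
      apply Finset.prod_pos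
      intro k _
      exact (hA _ _).lt_of_ne' (hPk a k)
    · intro a b hab
      rw [kronPow_apply]
      by_contra hne
      have hfac := Finset.prod_ne_zero_iff.1 hne
      have hle : ∀ k : Fin N, ((e a : Fin N → Fin mn) k : ℕ) ≤ ((e b : Fin N → Fin mn) k : ℕ) := by
        intro k
        by_contra hlt
        push_neg at hlt
        exact hfac k (Finset.mem_univ k) (htri _ _ (by simpa using hlt))
      have hsums : ∑ k : Fin N, ((e a : Fin N → Fin mn) k : ℕ)
          = ∑ k : Fin N, ((e b : Fin N → Fin mn) k : ℕ) := by
        show g _ = g _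
        rw [hsum a, hsum b]
      have heq := (Finset.sum_eq_sum_iff_of_le (fun k _ => hle k)).1 hsums
      have : (e a : Fin N → Fin mn) = (e b : Fin N → Fin mn) :=
        funext fun k => Fin.ext (heq k (Finset.mem_univ k))
      exact hab (e.injective (Subtype.ext this))
  calc V.card ^ N ≤ s.card := hcard
    _ ≤ (N*mn+1) * S.card := h1
    _ ≤ (N*mn+1) * subrank (kronPow A N) :=
        Nat.mul_le_mul_left _ (le_subrank _ hkle)

lemma subrank_kronPow_zero {m n : ℕ} (N : ℕ) (hN : 0 < N) :
    subrank (kronPow (0 : Matrix (Fin m) (Fin n) ℝ) N) = 0 := by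
  have hzero : kronPow (0 : Matrix (Fin m) (Fin n) ℝ) N = 0 := by
    ext i j
    rw [kronPow_apply]
    exact Finset.prod_eq_zero (Finset.mem_univ (⟨0, hN⟩ : Fin N)) rfl
  refine Nat.le_zero.1 (csSup_le ⟨0, zero_mem_kle _⟩ ?_)
  rintro q ⟨X, Y, -, -, hq⟩
  rw [hzero] at hq
  by_contra hq0
  rw [not_le] at hq0
  have := congrFun (congrFun hq (⟨0, hq0⟩ : Fin q)) (⟨0, hq0⟩ : Fin q)
  rw [Matrix.one_apply_eq] at this
  simp [Matrix.mul_apply] at this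

lemma one_le_subrank_kronPow {m n : ℕ} {A : Matrix (Fin m) (Fin n) ℝ}
    (hA : EntrywiseNonneg A) {i0 : Fin m} {j0 : Fin n} (h0 : A i0 j0 ≠ 0) (N : ℕ) :
    1 ≤ subrank (kronPow A N) := by
  apply le_subrank
  apply KLE_one_of (kronPow A N) (ι := fun _ _ => i0) (κ := fun _ _ => j0)
  · intro a
    rw [kronPow_apply]
    exact Finset.prod_pos fun k _ => (hA i0 j0).lt_of_ne' h0
  · intro a b hab
    exact absurd (Subsingleton.elim a b) hab


/-- For a rectangular lower triangular nonnegative matrix `A`, the asymptotic nonnegative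
subrank `lim_{N → ∞} Q(A^{⊗N})^{1/N}` is at least the number of nonzero diagonal
entries of `A`. -/
theorem asymptotic_subrank_triangular_lower_bound {m n : ℕ}
    (A : Matrix (Fin m) (Fin n) ℝ) (hA : EntrywiseNonneg A)
    (htri : ∀ (i : Fin m) (j : Fin n), (j : ℕ) < (i : ℕ) → A i j = 0) :
    ∃ L : ℝ,
      Filter.Tendsto (fun N : ℕ => (subrank (kronPow A N) : ℝ) ^ ((1 : ℝ) / (N : ℝ)))
        Filter.atTop (nhds L) ∧
      ((Finset.univ.filter (fun i : Fin (min m n) =>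
          A (Fin.castLE (min_le_left m n) i) (Fin.castLE (min_le_right m n) i) ≠ 0)).card
        : ℝ) ≤ L := by
  classical
  by_cases hA0 : A = 0
  · refine ⟨0, ?_, ?_⟩
    · refine Filter.Tendsto.congr' ?_ (tendsto_const_nhds (x := (0:ℝ)))
      filter_upwards [Filter.eventually_ge_atTop 1] with N hN
      rw [hA0, subrank_kronPow_zero N hN, Nat.cast_zero,
        Real.zero_rpow (by positivity : (1:ℝ)/(N:ℝ) ≠ 0)]
    · simp [hA0]
  -- main case
  have hex : ∃ i j, A i j ≠ 0 := by
    by_contra h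
    push_neg at h
    exact hA0 (by ext i j; exact h i j)
  obtain ⟨i0, j0, hij⟩ := hex
  set f : ℕ → ℕ := fun N => subrank (kronPow A N) with hf
  have hf1 : ∀ N, 1 ≤ f N := fun N => one_le_subrank_kronPow hA hij N
  have hfpos : ∀ N, (0:ℝ) < (f N : ℝ) := fun N => by exact_mod_cast hf1 N
  have hm1 : 1 ≤ m := i0.pos
  have hub : ∀ N, (f N : ℝ) ≤ (m : ℝ) ^ N := by
    intro N
    have h1 : f N ≤ m ^ N := by
      have := subrank_le_card (kronPow A N)
      rwa [Fintype.card_fun, Fintype.card_fin, Fintype.card_fin] at this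
    exact_mod_cast h1
  set u : ℕ → ℝ := fun N => -Real.log (f N) with hu
  have hsub : Subadditive u := by
    intro M N
    have hmul : ((f M : ℝ) * (f N : ℝ)) ≤ (f (M + N) : ℝ) := by
      exact_mod_cast subrank_superadd A M N
    have hlog : Real.log (f M) + Real.log (f N) ≤ Real.log (f (M + N)) := by
      rw [← Real.log_mul (hfpos M).ne' (hfpos N).ne']
      exact Real.log_le_log (mul_pos (hfpos M) (hfpos N)) hmul
    simp only [hu]
    linarith
  have hbdd : BddBelow (Set.range fun N => u N / N) := by
    refine ⟨-Real.log m, ?_⟩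
    rintro x ⟨N, rfl⟩
    rcases Nat.eq_zero_or_pos N with rfl | hN
    · simp only [Nat.cast_zero, div_zero]
      rw [neg_nonpos]
      exact Real.log_nonneg (by exact_mod_cast hm1)
    · have hNpos : (0:ℝ) < (N:ℝ) := by exact_mod_cast hN
      have hlog : Real.log (f N) ≤ Real.log m * N := by
        calc Real.log (f N) ≤ Real.log ((m:ℝ)^N) :=
              Real.log_le_log (hfpos N) (hub N)
          _ = N * Real.log m := by rw [Real.log_pow]
          _ = Real.log m * N := mul_comm _ _
      simp only [hu, neg_div]
      rw [neg_le_neg_iff, div_le_iff₀ hNpos]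
      exact hlog
  have hten := hsub.tendsto_lim hbdd
  set L : ℝ := Real.exp (-hsub.lim) with hL
  have hmainT : Filter.Tendsto (fun N : ℕ => (f N : ℝ) ^ ((1:ℝ)/(N:ℝ)))
      Filter.atTop (nhds L) := by
    have heq : (fun N : ℕ => (f N : ℝ) ^ ((1:ℝ)/(N:ℝ)))
        = fun N => Real.exp (-(u N / N)) := by
      funext N
      rw [Real.rpow_def_of_pos (hfpos N), mul_one_div]
      congr 1
      simp [hu, neg_div]
    rw [heq, hL]
    exact (Real.continuous_exp.tendsto _).comp hten.neg
  refine ⟨L, hmainT, ?_⟩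
  -- lower bound
  set r : ℕ := (Finset.univ.filter (fun i : Fin (min m n) =>
      A (Fin.castLE (min_le_left m n) i) (Fin.castLE (min_le_right m n) i) ≠ 0)).card with hr
  set c : ℕ := min m n with hc
  have hc1 : 0 < c := lt_min i0.pos j0.pos
  have hgle : ∀ N : ℕ, 1 ≤ N →
      (r : ℝ) / ((N*c+1 : ℕ) : ℝ) ^ ((1:ℝ)/(N:ℝ)) ≤ (f N : ℝ) ^ ((1:ℝ)/(N:ℝ)) := by
    intro N hN
    have hNR : (0:ℝ) < (N:ℝ) := by exact_mod_cast hN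
    have hD : (0:ℝ) < ((N*c+1 : ℕ) : ℝ) := by positivity
    have hkey : ((r:ℝ) ^ (N:ℕ)) / ((N*c+1 : ℕ) : ℝ) ≤ (f N : ℝ) := by
      rw [div_le_iff₀ hD]
      have : (r^N : ℕ) ≤ ((N*c+1) * f N : ℕ) := key_bound A hA htri N
      calc ((r:ℝ) ^ (N:ℕ)) = ((r^N : ℕ) : ℝ) := by push_cast; ring
        _ ≤ (((N*c+1) * f N : ℕ) : ℝ) := by exact_mod_cast this
        _ = (f N : ℝ) * ((N*c+1 : ℕ) : ℝ) := by push_cast; ring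
    have h2 := Real.rpow_le_rpow (by positivity) hkey (by positivity : (0:ℝ) ≤ 1/(N:ℝ))
    rwa [Real.div_rpow (by positivity) hD.le, ← Real.rpow_natCast (r:ℝ) N,
      ← Real.rpow_mul (by positivity), mul_one_div, div_self hNR.ne', Real.rpow_one] at h2
  have hDlim : Filter.Tendsto (fun N : ℕ => ((N*c+1 : ℕ) : ℝ) ^ ((1:ℝ)/(N:ℝ)))
      Filter.atTop (nhds 1) := by
    have hlogN : Filter.Tendsto (fun N : ℕ => Real.log (N:ℝ) / (N:ℝ))
        Filter.atTop (nhds 0) :=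
      Real.isLittleO_log_id_atTop.tendsto_div_nhds_zero.comp tendsto_natCast_atTop_atTop
    have hconst : Filter.Tendsto (fun N : ℕ => Real.log ((c:ℝ)+1) / (N:ℝ))
        Filter.atTop (nhds 0) := tendsto_const_div_atTop_nhds_zero_nat _
    have hsumlim : Filter.Tendsto
        (fun N : ℕ => (Real.log ((c:ℝ)+1) + Real.log (N:ℝ)) / (N:ℝ))
        Filter.atTop (nhds 0) := by
      have := hconst.add hlogN
      simpa [add_div] using this
    have hexp : Filter.Tendsto (fun N : ℕ => Real.log ((N*c+1 : ℕ) : ℝ) / (N:ℝ))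
        Filter.atTop (nhds 0) := by
      apply squeeze_zero' ?_ ?_ hsumlim
      · filter_upwards with N
        apply div_nonneg ?_ (Nat.cast_nonneg N)
        apply Real.log_nonneg
        exact_mod_cast Nat.le_add_left 1 (N*c)
      · filter_upwards [Filter.eventually_ge_atTop 1] with N hN
        have hN1 : (1:ℝ) ≤ (N:ℝ) := by exact_mod_cast hN
        have hNpos : (0:ℝ) < (N:ℝ) := by linarith
        have harg : ((N*c+1 : ℕ) : ℝ) ≤ ((c:ℝ)+1) * (N:ℝ) := by
          push_cast
          nlinarith [ (0:ℝ) ≤ (c:ℝ) ]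
        have hlogle : Real.log ((N*c+1 : ℕ) : ℝ)
            ≤ Real.log ((c:ℝ)+1) + Real.log (N:ℝ) := by
          rw [← Real.log_mul (by positivity) hNpos.ne']
          exact Real.log_le_log (by positivity) harg
        gcongr
    have heq : (fun N : ℕ => ((N*c+1:ℕ):ℝ)^((1:ℝ)/(N:ℝ)))
        = fun N => Real.exp (Real.log ((N*c+1:ℕ):ℝ) / (N:ℝ)) := by
      funext N
      rw [Real.rpow_def_of_pos (by positivity), mul_one_div]
    rw [heq]
    have := (Real.continuous_exp.tendsto 0).comp hexp
    simpa [Function.comp_def] using this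
  have hglim : Filter.Tendsto (fun N : ℕ =>
      (r : ℝ) / ((N*c+1 : ℕ) : ℝ) ^ ((1:ℝ)/(N:ℝ))) Filter.atTop (nhds (r:ℝ)) := by
    have := Filter.Tendsto.div (tendsto_const_nhds (x := (r:ℝ))) hDlim one_ne_zero
    simpa [Pi.div_def] using this
  exact le_of_tendsto_of_tendsto hglim hmainT
    (by filter_upwards [Filter.eventually_ge_atTop 1] with N hN; exact hgle N hN)
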